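/- arXiv:1611.03930 — 5 statements merged into one kernel-verified Lean document; each statement's English description precedes it below -/
import Mathlib

section
/- Let C be an elastic tensor and let l = (l₁,l₂,l₃) ∈ ℝ³ be a unit vector with l₁² < 1. Define m₀, n₀, n_φ as above, and set S₂(l) = (1/(2π)) ∫₀^{2π} T(n_φ)⁻¹ dφ. Then S₂(l) is a symmetric positive definite 3×3 real matrix; in particular S₂(l) is invertible. -/
/-- The acoustic-type matrix `T(n)_{ik} = ∑_{j,l} C i j k l * n j * n l`. -/
noncomputable def acousticT (C : Fin 3 → Fin 3 → Fin 3 → Fin 3 → ℝ)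
    (n : EuclideanSpace ℝ (Fin 3)) : Matrix (Fin 3) (Fin 3) ℝ :=
  Matrix.of fun i k => ∑ j, ∑ l, C i j k l * n j * n l

/-- `m₀ = (1-l₁²)^{-1/2} (1-l₁², -l₁l₂, -l₁l₃)`. -/
noncomputable def mZero (l : EuclideanSpace ℝ (Fin 3)) : EuclideanSpace ℝ (Fin 3) :=
  (Real.sqrt (1 - (l 0) ^ 2))⁻¹ •
    (WithLp.equiv 2 (Fin 3 → ℝ)).symm ![1 - (l 0) ^ 2, -(l 0) * (l 1), -(l 0) * (l 2)]

/-- `n₀ = (1-l₁²)^{-1/2} (0, l₃, -l₂)`. -/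
noncomputable def nZero (l : EuclideanSpace ℝ (Fin 3)) : EuclideanSpace ℝ (Fin 3) :=
  (Real.sqrt (1 - (l 0) ^ 2))⁻¹ • (WithLp.equiv 2 (Fin 3 → ℝ)).symm ![0, l 2, -(l 1)]

/-- `n_φ = -m₀ sin φ + n₀ cos φ`. -/
noncomputable def nPhi (l : EuclideanSpace ℝ (Fin 3)) (φ : ℝ) : EuclideanSpace ℝ (Fin 3) :=
  (-Real.sin φ) • mZero l + Real.cos φ • nZero l

/-- `S₂(l) = (1/(2π)) ∫₀^{2π} T(n_φ)⁻¹ dφ` (entrywise integral). -/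
noncomputable def STwo (C : Fin 3 → Fin 3 → Fin 3 → Fin 3 → ℝ)
    (l : EuclideanSpace ℝ (Fin 3)) : Matrix (Fin 3) (Fin 3) ℝ :=
  Matrix.of fun i k =>
    (2 * Real.pi)⁻¹ * ∫ φ in (0:ℝ)..(2 * Real.pi), (acousticT C (nPhi l φ))⁻¹ i k

/-!
For `n ≠ 0` the acoustic tensor `T(n)` is positive definite: its quadratic form at `x` is the
elastic energy of the symmetric strain `(x ⊗ n + n ⊗ x) / 2`, which strong convexity bounds below
by `λ (|x|² |n|² + (x · n)²) / 2 > 0`. The vectors `n_φ` are unit vectors, so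
`φ ↦ T(n_φ)⁻¹` is a continuous path of positive definite matrices, and the average of such a path
over `[0, 2π]` is again positive definite.
-/

open Matrix MeasureTheory

theorem Continuous.matrix_inv {X K n : Type*} [TopologicalSpace X] [Fintype n] [DecidableEq n]
    [Field K] [TopologicalSpace K] [IsTopologicalDivisionRing K] {A : X → Matrix n n K}
    (hA : Continuous A) (h : ∀ x, (A x).det ≠ 0) : Continuous fun x => (A x)⁻¹ := by
  simp only [inv_def, Ring.inverse_eq_inv']
  exact (hA.matrix_det.inv₀ h).smul hA.matrix_adjugate

section IntervalIntegral

variable {ι : Type*} [Fintype ι] {f : ℝ → Matrix ι ι ℝ} {a b : ℝ}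

lemma intervalIntegrable_mulVec_apply
    (hf : ∀ i j, IntervalIntegrable (fun t => f t i j) volume a b) (x : ι → ℝ) (i : ι) :
    IntervalIntegrable (fun t => (f t *ᵥ x) i) volume a b := by
  simpa only [mulVec, dotProduct, Finset.sum_fn] using
    IntervalIntegrable.sum (f := fun j t => f t i j * x j) Finset.univ
      fun j _ => (hf i j).mul_const (x j)

lemma intervalIntegrable_dotProduct_mulVec
    (hf : ∀ i j, IntervalIntegrable (fun t => f t i j) volume a b) (x : ι → ℝ) :
    IntervalIntegrable (fun t => x ⬝ᵥ (f t *ᵥ x)) volume a b := by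
  simpa only [dotProduct, Finset.sum_fn] using
    IntervalIntegrable.sum (f := fun i t => x i * (f t *ᵥ x) i) Finset.univ
      fun i _ => (intervalIntegrable_mulVec_apply hf x i).const_mul (x i)

lemma dotProduct_mulVec_intervalIntegral
    (hf : ∀ i j, IntervalIntegrable (fun t => f t i j) volume a b) (x : ι → ℝ) :
    x ⬝ᵥ (of (fun i j => ∫ t in a..b, f t i j) *ᵥ x) = ∫ t in a..b, x ⬝ᵥ (f t *ᵥ x) := by
  simp only [dotProduct]
  rw [intervalIntegral.integral_finsetSum fun i _ =>
    (intervalIntegrable_mulVec_apply hf x i).const_mul (x i)]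
  refine Finset.sum_congr rfl fun i _ => ?_
  simp only [mulVec, dotProduct, of_apply]
  rw [intervalIntegral.integral_const_mul, intervalIntegral.integral_finsetSum
    fun j _ => (hf i j).mul_const _]
  simp only [intervalIntegral.integral_mul_const]

lemma posDef_intervalIntegral (hf : ∀ i j, IntervalIntegrable (fun t => f t i j) volume a b)
    (hpos : ∀ t ∈ Set.Icc a b, (f t).PosDef) (hab : a < b) :
    (of fun i j => ∫ t in a..b, f t i j).PosDef := by
  refine posDef_iff_dotProduct_mulVec.mpr ⟨?_, fun x hx => ?_⟩
  · ext i j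
    simp only [conjTranspose_apply, of_apply, star_trivial]
    refine intervalIntegral.integral_congr fun t ht => ?_
    rw [Set.uIcc_of_le hab.le] at ht
    exact (hpos t ht).isHermitian.apply i j
  · rw [star_trivial, dotProduct_mulVec_intervalIntegral hf]
    refine intervalIntegral.intervalIntegral_pos_of_pos_on
      (intervalIntegrable_dotProduct_mulVec hf x) (fun t ht => ?_) hab
    simpa using (hpos t (Set.Ioo_subset_Icc_self ht)).dotProduct_mulVec_pos hx

end IntervalIntegral

section ElasticTensor

variable {ι : Type*} [Fintype ι] {C : ι → ι → ι → ι → ℝ}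

lemma sum_elastic_symmetrize (hC₁ : ∀ i j k l, C i j k l = C j i k l)
    (hC₂ : ∀ i j k l, C i j k l = C i j l k) (a : Matrix ι ι ℝ) :
    ∑ i, ∑ j, ∑ k, ∑ l, C i j k l * ((a i j + a j i) / 2) * ((a k l + a l k) / 2) =
      ∑ i, ∑ j, ∑ k, ∑ l, C i j k l * a i j * a k l := by
  have left (b : ι → ι → ℝ) : ∑ i, ∑ j, ∑ k, ∑ l, C i j k l * a j i * b k l =
      ∑ i, ∑ j, ∑ k, ∑ l, C i j k l * a i j * b k l := by
    rw [Finset.sum_comm]; simp only [hC₁ _ _]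
  have right (b : ι → ι → ℝ) : ∑ i, ∑ j, ∑ k, ∑ l, C i j k l * b i j * a l k =
      ∑ i, ∑ j, ∑ k, ∑ l, C i j k l * b i j * a k l := by
    refine Finset.sum_congr rfl fun i _ => Finset.sum_congr rfl fun j _ => ?_
    rw [Finset.sum_comm]; simp only [hC₂ i j]
  have expand (i j k l : ι) : C i j k l * ((a i j + a j i) / 2) * ((a k l + a l k) / 2) =
      (C i j k l * a i j * a k l + C i j k l * a i j * a l k +
        C i j k l * a j i * a k l + C i j k l * a j i * a l k) / 4 := by ring
  simp only [expand, ← Finset.sum_div, Finset.sum_add_distrib]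
  rw [left fun k l => a l k, right a, left a]
  ring

lemma sum_sq_symm_outer (x n : ι → ℝ) :
    ∑ i, ∑ j, ((x i * n j + x j * n i) / 2) ^ 2 =
      ((x ⬝ᵥ x) * (n ⬝ᵥ n) + (x ⬝ᵥ n) ^ 2) / 2 := by
  have expand (i j : ι) : ((x i * n j + x j * n i) / 2) ^ 2 =
      x i ^ 2 * n j ^ 2 / 4 + x j ^ 2 * n i ^ 2 / 4 + x i * n i * (x j * n j) / 2 := by ring
  simp only [expand, Finset.sum_add_distrib, ← Finset.sum_div, ← Finset.sum_mul_sum]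
  rw [Finset.sum_comm (f := fun i j => x j ^ 2 * n i ^ 2), ← Finset.sum_mul_sum]
  simp only [dotProduct, ← sq]
  ring

end ElasticTensor

section AcousticTensor

variable {C : Fin 3 → Fin 3 → Fin 3 → Fin 3 → ℝ}

lemma dotProduct_acousticT_mulVec (x : Fin 3 → ℝ) (n : EuclideanSpace ℝ (Fin 3)) :
    x ⬝ᵥ (acousticT C n *ᵥ x) = ∑ i, ∑ j, ∑ k, ∑ l, C i j k l * (x i * n j) * (x k * n l) := by
  simp only [dotProduct, mulVec, acousticT, of_apply, Finset.mul_sum, Finset.sum_mul]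
  refine Finset.sum_congr rfl fun i _ => ?_
  rw [Finset.sum_comm]
  refine Finset.sum_congr rfl fun j _ => Finset.sum_congr rfl fun k _ =>
    Finset.sum_congr rfl fun l _ => ?_
  ring

lemma acousticT_isHermitian (hC : ∀ i j k l, C i j k l = C k l i j)
    (n : EuclideanSpace ℝ (Fin 3)) : (acousticT C n).IsHermitian := by
  ext i k
  simp only [conjTranspose_apply, acousticT, of_apply, star_trivial]
  rw [Finset.sum_comm]
  refine Finset.sum_congr rfl fun j _ => Finset.sum_congr rfl fun l _ => ?_
  rw [hC]
  ring

lemma acousticT_posDef (hC₂ : ∀ i j k l, C i j k l = C i j l k)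
    (hC : ∀ i j k l, C i j k l = C k l i j) {lam : ℝ} (hlam : 0 < lam)
    (hconv : ∀ ε : Matrix (Fin 3) (Fin 3) ℝ, ε.IsSymm →
      lam * ∑ i, ∑ j, (ε i j) ^ 2 ≤ ∑ i, ∑ j, ∑ k, ∑ l, C i j k l * ε i j * ε k l)
    {n : EuclideanSpace ℝ (Fin 3)} (hn : n ≠ 0) : (acousticT C n).PosDef := by
  refine posDef_iff_dotProduct_mulVec.mpr ⟨acousticT_isHermitian hC n, fun x hx => ?_⟩
  have hC₁ (i j k l : Fin 3) : C i j k l = C j i k l := by rw [hC, hC₂, ← hC]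
  set ε : Matrix (Fin 3) (Fin 3) ℝ := of fun i j => (x i * n j + x j * n i) / 2
  have hε : ε.IsSymm := by
    ext i j
    simp only [ε, transpose_apply, of_apply]
    ring
  have hxx : 0 < x ⬝ᵥ x := by simpa using dotProduct_self_star_pos_iff.mpr hx
  have hnn : 0 < n.ofLp ⬝ᵥ n.ofLp := by
    simpa using dotProduct_self_star_pos_iff.mpr ((WithLp.ofLp_eq_zero 2).not.mpr hn)
  calc 0 < lam * ((x ⬝ᵥ x) * (n.ofLp ⬝ᵥ n.ofLp) + (x ⬝ᵥ n.ofLp) ^ 2) / 2 := by positivity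
    _ = lam * ∑ i, ∑ j, ε i j ^ 2 := by
      rw [mul_div_assoc, ← sum_sq_symm_outer]; rfl
    _ ≤ ∑ i, ∑ j, ∑ k, ∑ l, C i j k l * ε i j * ε k l := hconv ε hε
    _ = star x ⬝ᵥ (acousticT C n *ᵥ x) := by
      rw [star_trivial, dotProduct_acousticT_mulVec]
      exact sum_elastic_symmetrize hC₁ hC₂ (of fun i j => x i * n j)

lemma continuous_acousticT : Continuous (acousticT C) :=
  continuous_matrix fun i k => by simp only [acousticT, of_apply]; fun_prop

end AcousticTensor

lemma norm_nPhi {l : EuclideanSpace ℝ (Fin 3)} (hl : ‖l‖ = 1) (hl1 : l 0 ^ 2 < 1) (φ : ℝ) :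
    ‖nPhi l φ‖ = 1 := by
  have hl' : l 0 ^ 2 + l 1 ^ 2 + l 2 ^ 2 = 1 := by
    simpa [EuclideanSpace.norm_eq, Fin.sum_univ_three, Real.sqrt_eq_one] using hl
  have hr : √(1 - l 0 ^ 2) ^ 2 = 1 - l 0 ^ 2 := Real.sq_sqrt (by linarith)
  have hr0 : √(1 - l 0 ^ 2) ≠ 0 := (Real.sqrt_pos.mpr (by linarith)).ne'
  rw [EuclideanSpace.norm_eq, Real.sqrt_eq_one]
  simp only [nPhi, mZero, nZero, WithLp.equiv_symm_apply, PiLp.add_apply, PiLp.neg_apply,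
    PiLp.smul_apply, smul_eq_mul, Real.norm_eq_abs, sq_abs, Fin.sum_univ_three, cons_val_zero,
    cons_val_one, cons_val, neg_smul, neg_mul, mul_neg, neg_neg, mul_zero, add_zero,
    even_two, Even.neg_pow]
  field_simp
  rw [hr]
  linear_combination (Real.sin φ ^ 2 * l 0 ^ 2 + Real.cos φ ^ 2) * hl' +
    (1 - l 0 ^ 2) * Real.sin_sq_add_cos_sq φ

lemma continuous_nPhi (l : EuclideanSpace ℝ (Fin 3)) : Continuous (nPhi l) := by
  unfold nPhi; fun_prop

theorem STwo_posDef
    (C : Fin 3 → Fin 3 → Fin 3 → Fin 3 → ℝ)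
    (hsym1 : ∀ i j k l, C i j k l = C i j l k)
    (hsym2 : ∀ i j k l, C i j k l = C k l i j)
    (hconv : ∃ lam : ℝ, 0 < lam ∧ ∀ ε : Matrix (Fin 3) (Fin 3) ℝ, ε.IsSymm →
      lam * ∑ i, ∑ j, (ε i j) ^ 2 ≤ ∑ i, ∑ j, ∑ k, ∑ l, C i j k l * ε i j * ε k l)
    (l : EuclideanSpace ℝ (Fin 3)) (hl : ‖l‖ = 1) (hl1 : (l 0) ^ 2 < 1) :
    (STwo C l).IsSymm ∧ (STwo C l).PosDef ∧ IsUnit (STwo C l).det := by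
  obtain ⟨lam, hlam, hconv⟩ := hconv
  have hT (φ : ℝ) : (acousticT C (nPhi l φ)).PosDef := by
    refine acousticT_posDef hsym1 hsym2 hlam hconv fun h => ?_
    simpa [h] using norm_nPhi hl hl1 φ
  have hcont : Continuous fun φ => (acousticT C (nPhi l φ))⁻¹ :=
    (continuous_acousticT.comp (continuous_nPhi l)).matrix_inv fun φ =>
      ((isUnit_iff_isUnit_det _).mp (hT φ).isUnit).ne_zero
  have hS : (STwo C l).PosDef := by
    have hS_eq : STwo C l = (2 * Real.pi)⁻¹ •
        of fun i k => ∫ φ in (0 : ℝ)..2 * Real.pi, (acousticT C (nPhi l φ))⁻¹ i k := rfl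
    rw [hS_eq]
    refine (posDef_intervalIntegral (fun i k => ?_) (fun φ _ => (hT φ).inv)
      Real.two_pi_pos).smul (inv_pos.mpr Real.two_pi_pos)
    exact (hcont.matrix_elem i k).intervalIntegrable _ _
  exact ⟨isHermitian_iff_isSymm.mp hS.isHermitian, hS, (isUnit_iff_isUnit_det _).mp hS.isUnit⟩
end

section
/- Let C be an elastic tensor. For (l₁,l₂) in the open unit disk D = {(l₁,l₂) ∈ ℝ² : l₁² + l₂² < 1}, let l = (l₁, l₂, √(1 - l₁² - l₂²)), define m₀, n₀, m_φ, n_φ as above, and set S₁(l) = -(1/(2π)) ∫₀^{2π} T(n_φ)⁻¹ · R(m_φ, n_φ)ᵀ dφ and S₂(l) = (1/(2π)) ∫₀^{2π} T(n_φ)⁻¹ dφ. Then the maps (l₁,l₂) ↦ S₁(l) and (l₁,l₂) ↦ S₂(l) are real-analytic on D (entrywise). -/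
/-- The matrix `R(m,n)_{ik} = ∑_{j,l} C i j k l * m j * n l`. -/
noncomputable def matR (C : Fin 3 → Fin 3 → Fin 3 → Fin 3 → ℝ)
    (m n : EuclideanSpace ℝ (Fin 3)) : Matrix (Fin 3) (Fin 3) ℝ :=
  Matrix.of fun i k => ∑ j, ∑ l, C i j k l * m j * n l

/-- `m_φ = m₀ cos φ + n₀ sin φ`. -/
noncomputable def mPhi (l : EuclideanSpace ℝ (Fin 3)) (φ : ℝ) : EuclideanSpace ℝ (Fin 3) :=
  Real.cos φ • mZero l + Real.sin φ • nZero l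

/-- `S₁(l) = -(1/(2π)) ∫₀^{2π} T(n_φ)⁻¹ R(m_φ,n_φ)ᵀ dφ` (entrywise integral). -/
noncomputable def SOne (C : Fin 3 → Fin 3 → Fin 3 → Fin 3 → ℝ)
    (l : EuclideanSpace ℝ (Fin 3)) : Matrix (Fin 3) (Fin 3) ℝ :=
  Matrix.of fun i k =>
    -(2 * Real.pi)⁻¹ * ∫ φ in (0:ℝ)..(2 * Real.pi),
      ((acousticT C (nPhi l φ))⁻¹ * (matR C (mPhi l φ) (nPhi l φ)).transpose) i k

/-- The unit vector `l = (l₁, l₂, √(1-l₁²-l₂²))` parametrized by the unit disk. -/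
noncomputable def lVec (p : ℝ × ℝ) : EuclideanSpace ℝ (Fin 3) :=
  (WithLp.equiv 2 (Fin 3 → ℝ)).symm ![p.1, p.2, Real.sqrt (1 - p.1 ^ 2 - p.2 ^ 2)]

/-!
Both integrands are real-analytic jointly in `((l₁, l₂), φ) ∈ D × ℝ`: the frame `m_φ, n_φ` is
built from `cos φ`, `sin φ` and square roots of positive quantities, `n_φ ≠ 0`, and `T(n)` is
invertible for `n ≠ 0` because for `T(n) v = 0` strong convexity applied to the symmetric matrix
`v nᵀ + n vᵀ`, whose elastic energy is `4 vᵀ T(n) v = 0`, forces `v = 0`.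

An integral over a compact interval of a jointly analytic function is analytic in the parameter.
Cover `[a, b]` by finitely many intervals, each within distance `δ` of a point `s` at which the
integrand has a power series `P` around `(x₀, s)` converging on a ball of radius `> 2δ`.
Re-expanding `P` around `(x₀, t)` for `t` in the interval gives power series in `x` whose
coefficients are continuous in `t` and uniformly bounded, so they can be integrated termwise.
-/

open Set Filter Topology MeasureTheory
open scoped NNReal ENNReal Interval

section PowerSeries

variable {𝕜 E F G : Type*} [NontriviallyNormedField 𝕜] [NormedAddCommGroup E] [NormedSpace 𝕜 E]
  [NormedAddCommGroup F] [NormedSpace 𝕜 F] [NormedAddCommGroup G] [NormedSpace 𝕜 G]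

theorem FormalMultilinearSeries.norm_compContinuousLinearMap_inl_le
    (P : FormalMultilinearSeries 𝕜 (E × G) F) (n : ℕ) :
    ‖P.compContinuousLinearMap (ContinuousLinearMap.inl 𝕜 E G) n‖ ≤ ‖P n‖ :=
  (P.norm_compContinuousLinearMap_le _ n).trans <| mul_le_of_le_one_right (norm_nonneg _) <|
    pow_le_one₀ (norm_nonneg _) (ContinuousLinearMap.norm_inl_le_one 𝕜 E G)

theorem HasFPowerSeriesOnBall.comp_prodMk_right {g : E × G → F}
    {P : FormalMultilinearSeries 𝕜 (E × G) F} {x : E} {t : G} {r : ℝ≥0∞}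
    (hg : HasFPowerSeriesOnBall g P (x, t) r) :
    HasFPowerSeriesOnBall (fun y => g (y, t))
      (P.compContinuousLinearMap (ContinuousLinearMap.inl 𝕜 E G)) x r := by
  have hshift := hg.comp_sub (0, -t)
  rw [show ((x, t) + (0, -t) : E × G) = ContinuousLinearMap.inl 𝕜 E G x by simp] at hshift
  refine (hshift.compContinuousLinearMap.mono hg.r_pos ?_).congr ?_
  · have hinl : ‖ContinuousLinearMap.inl 𝕜 E G‖ₑ ≤ 1 := by
      simpa [enorm_eq_nnnorm, ← NNReal.coe_le_one] using ContinuousLinearMap.norm_inl_le_one 𝕜 E G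
    simpa using ENNReal.div_le_div_left hinl r
  · intro y _
    simp

theorem FormalMultilinearSeries.exists_nnnorm_changeOrigin_mul_pow_le
    (P : FormalMultilinearSeries 𝕜 E F) {δ : ℝ≥0} (hδ : ((δ + δ : ℝ≥0) : ℝ≥0∞) < P.radius) :
    ∃ K : ℝ≥0, ∀ x : E, ‖x‖₊ ≤ δ → ∀ k, ‖P.changeOrigin x k‖₊ * δ ^ k ≤ K := by
  set S : ℕ → ℝ≥0 := fun k =>
    ∑' s : Σ l : ℕ, { s : Finset (Fin (k + l)) // s.card = l }, ‖P (k + s.1)‖₊ * δ ^ s.1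
  have hδ' : (δ : ℝ≥0∞) < P.radius := lt_of_le_of_lt (by simp) hδ
  have hS : ∀ x : E, ‖x‖₊ ≤ δ → ∀ k, ‖P.changeOrigin x k‖₊ ≤ S k := fun x hx k =>
    have hle : ∀ s : Σ l : ℕ, { s : Finset (Fin (k + l)) // s.card = l },
        ‖P (k + s.1)‖₊ * ‖x‖₊ ^ s.1 ≤ ‖P (k + s.1)‖₊ * δ ^ s.1 :=
      fun s => mul_le_mul' le_rfl (pow_le_pow_left' hx _)
    have hsum := P.changeOriginSeries_summable_aux₂ hδ' k
    (P.nnnorm_changeOrigin_le k (lt_of_le_of_lt (by exact_mod_cast hx) hδ')).trans <|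
      (NNReal.summable_of_le hle hsum).tsum_le_tsum hle hsum
  have hsum : Summable fun k => S k * δ ^ k := by
    refine (NNReal.summable_sigma.1 (P.changeOriginSeries_summable_aux₁ (by simpa using hδ))).2.congr
      fun k => ?_
    simp only [S, NNReal.tsum_mul_right]
  exact ⟨∑' k, S k * δ ^ k, fun x hx k =>
    (mul_le_mul' (hS x hx k) le_rfl).trans (hsum.le_tsum' k)⟩

theorem AnalyticAt.exists_hasFPowerSeriesOnBall_add_lt {g : E → F} {x : E}
    (hg : AnalyticAt 𝕜 g x) : ∃ (P : FormalMultilinearSeries 𝕜 E F) (ρ : ℝ≥0∞) (δ : ℝ≥0),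
      0 < δ ∧ ((δ + δ : ℝ≥0) : ℝ≥0∞) < ρ ∧ HasFPowerSeriesOnBall g P x ρ := by
  obtain ⟨P, ρ, hP⟩ := hg
  obtain ⟨c, hc, hcρ⟩ := ENNReal.lt_iff_exists_nnreal_btwn.1 hP.r_pos
  exact ⟨P, ρ, c / 2, half_pos (by exact_mod_cast hc), by rwa [add_halves], hP⟩

end PowerSeries

section ParametricIntegral

open Function

variable {E F : Type*} [NormedAddCommGroup E] [NormedSpace ℝ E] [NormedAddCommGroup F]
  [NormedSpace ℝ F] [CompleteSpace F]

theorem hasFPowerSeriesOnBall_intervalIntegral {g : E → ℝ → F}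
    {q : ℝ → FormalMultilinearSeries ℝ E F} {x₀ : E} {a b K : ℝ} {δ : ℝ≥0} (hδ : 0 < δ)
    (hg : ∀ t ∈ uIcc a b, HasFPowerSeriesOnBall (g · t) (q t) x₀ δ)
    (hq : ∀ n, ContinuousOn (fun t => q t n) (uIcc a b))
    (hK : ∀ t ∈ uIcc a b, ∀ n, ‖q t n‖ * δ ^ n ≤ K) :
    HasFPowerSeriesOnBall (fun x => ∫ t in a..b, g x t) (fun n => ∫ t in a..b, q t n) x₀ δ := by
  have hδ' : (0 : ℝ) < δ := hδ
  have hqK : ∀ n, ∀ t ∈ Ι a b, ‖q t n‖ ≤ K / δ ^ n := fun n t ht =>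
    (le_div_iff₀ (by positivity)).2 (hK t (uIoc_subset_uIcc ht) n)
  refine ⟨?_, by exact_mod_cast hδ, fun {y} hy => ?_⟩
  · refine FormalMultilinearSeries.le_radius_of_bound _ (K * |b - a|) fun n => ?_
    calc ‖∫ t in a..b, q t n‖ * δ ^ n ≤ K / δ ^ n * |b - a| * δ ^ n := by
          gcongr
          exact intervalIntegral.norm_integral_le_of_norm_le_const (hqK n)
      _ = K * |b - a| := by field_simp
  have hy' : ‖y‖ < δ := by simpa [enorm_eq_nnnorm] using hy
  have happly : ∀ n, (∫ t in a..b, q t n) (fun _ => y) = ∫ t in a..b, q t n (fun _ => y) :=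
    fun n => ((ContinuousMultilinearMap.apply ℝ (fun _ : Fin n => E) F fun _ => y)
      |>.intervalIntegral_comp_comm ((hq n).intervalIntegrable)).symm
  simp only [happly]
  refine intervalIntegral.hasSum_integral_of_dominated_convergence
    (fun n _ => K * (‖y‖ / δ) ^ n) (fun n => ?_) (fun n => ?_) ?_ (by simp) ?_
  · exact ((ContinuousMultilinearMap.apply ℝ (fun _ : Fin n => E) F fun _ => y).continuous.comp_continuousOn
      (hq n)).intervalIntegrable.def'.aestronglyMeasurable
  · refine ae_of_all _ fun t ht => ?_
    calc ‖q t n fun _ => y‖ ≤ ‖q t n‖ * ‖y‖ ^ n := by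
          simpa using (q t n).le_opNorm fun _ => y
      _ ≤ K / δ ^ n * ‖y‖ ^ n := by gcongr; exact hqK n t ht
      _ = K * (‖y‖ / δ) ^ n := by rw [div_pow]; ring
  · exact ae_of_all _ fun t _ => (summable_geometric_of_lt_one (by positivity)
      ((div_lt_one hδ').2 hy')).mul_left K
  · exact ae_of_all _ fun t ht => (hg t (uIoc_subset_uIcc ht)).hasSum hy

theorem HasFPowerSeriesOnBall.analyticAt_intervalIntegral {g : E → ℝ → F}
    {P : FormalMultilinearSeries ℝ (E × ℝ) F} {x₀ : E} {s a b : ℝ} {ρ : ℝ≥0∞} {δ : ℝ≥0}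
    (hP : HasFPowerSeriesOnBall (uncurry g) P (x₀, s) ρ) (hδ : 0 < δ)
    (hδρ : ((δ + δ : ℝ≥0) : ℝ≥0∞) < ρ) (hab : uIcc a b ⊆ Metric.closedBall s δ) :
    AnalyticAt ℝ (fun x => ∫ t in a..b, g x t) x₀ := by
  set v : ℝ → E × ℝ := fun t => (0, t - s)
  have hv : ∀ t ∈ uIcc a b, ‖v t‖₊ ≤ δ := fun t ht => by
    have := hab ht
    rw [Metric.mem_closedBall, Real.dist_eq] at this
    rw [← NNReal.coe_le_coe]
    simpa [v] using this
  have hvρ : ∀ t ∈ uIcc a b, (‖v t‖₊ : ℝ≥0∞) < ρ := fun t ht =>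
    lt_of_le_of_lt (by exact_mod_cast (hv t ht).trans le_self_add) hδρ
  obtain ⟨K, hK⟩ := P.exists_nnnorm_changeOrigin_mul_pow_le (hδρ.trans_le hP.r_le)
  refine (hasFPowerSeriesOnBall_intervalIntegral (g := g) (K := K)
    (q := fun t => (P.changeOrigin (v t)).compContinuousLinearMap (.inl ℝ E ℝ)) hδ
    (fun t ht => ?_) (fun n => ?_) (fun t ht n => ?_)).analyticAt
  · have hPt := hP.changeOrigin (hvρ t ht)
    have hshift : (x₀, s) + v t = (x₀, t) := by simp [v]
    rw [hshift] at hPt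
    refine (hPt.mono (by exact_mod_cast hδ) ?_).comp_prodMk_right
    refine ENNReal.le_sub_of_add_le_right ENNReal.coe_ne_top (le_trans ?_ hδρ.le)
    exact_mod_cast add_le_add_right (hv t ht) δ
  · have hco := (P.hasFPowerSeriesOnBall_changeOrigin n (hP.r_pos.trans_le hP.r_le)).continuousOn
    have hmaps : MapsTo v (uIcc a b) (Metric.eball 0 P.radius) := fun t ht => by
      rw [mem_eball_zero_iff, enorm_eq_nnnorm]
      exact (hvρ t ht).trans_le hP.r_le
    exact (ContinuousMultilinearMap.compContinuousLinearMapL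
      fun _ : Fin n => ContinuousLinearMap.inl ℝ E ℝ).continuous.comp_continuousOn
        (hco.comp (by fun_prop) hmaps)
  · calc _ ≤ ‖P.changeOrigin (v t) n‖ * δ ^ n := by
          gcongr
          exact FormalMultilinearSeries.norm_compContinuousLinearMap_inl_le _ n
      _ ≤ K := by exact_mod_cast hK (v t) (hv t ht) n

theorem analyticAt_parametric_intervalIntegral {g : E → ℝ → F} {x₀ : E} {a b : ℝ}
    (hg : ∀ t ∈ uIcc a b, AnalyticAt ℝ (uncurry g) (x₀, t)) :
    AnalyticAt ℝ (fun x => ∫ t in a..b, g x t) x₀ := by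
  wlog hab : a ≤ b generalizing a b
  · refine (this (fun t ht => hg t (uIcc_comm a b ▸ ht)) (le_of_not_ge hab)).neg.congr ?_
    exact Eventually.of_forall fun x => (intervalIntegral.integral_symm b a).symm
  rw [uIcc_of_le hab] at hg
  choose P ρ δ hδ hδρ hP using fun s : Icc a b => (hg s s.2).exists_hasFPowerSeriesOnBall_add_lt
  obtain ⟨τ, hτ₀, hτ, ⟨m, hτm⟩, hτc⟩ := exists_monotone_Icc_subset_open_cover_Icc hab
    (c := fun s : Icc a b => Subtype.val ⁻¹' Metric.ball (s : ℝ) (δ s))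
    (fun s => Metric.isOpen_ball.preimage continuous_subtype_val)
    (fun t _ => mem_iUnion.2 ⟨t, Metric.mem_ball_self (by exact_mod_cast hδ t)⟩)
  have hpiece : ∀ n, AnalyticAt ℝ (fun x => ∫ t in τ n..τ (n + 1), g x t) x₀ := fun n => by
    obtain ⟨s, hs⟩ := hτc n
    refine (hP s).analyticAt_intervalIntegral (hδ s) (hδρ s) fun t ht => ?_
    rw [uIcc_of_le (show (τ n : ℝ) ≤ τ (n + 1) from hτ (n.le_add_right 1))] at ht
    have hts : (⟨t, ⟨(τ n).2.1.trans ht.1, ht.2.trans (τ (n + 1)).2.2⟩⟩ : Icc a b) ∈ _ := hs ht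
    exact Metric.ball_subset_closedBall hts
  have hnear : ∀ᶠ x in 𝓝 x₀, ContinuousOn (g x) (Icc a b) := by
    filter_upwards [isCompact_Icc.eventually_forall_of_forall_eventually
      (P := fun x t => AnalyticAt ℝ (uncurry g) (x, t))
      fun t ht => (hg t ht).eventually_analyticAt] with x hx
    exact fun t ht => ((hx t ht).continuousAt.comp (by fun_prop)).continuousWithinAt
  refine (Finset.analyticAt_fun_sum (Finset.range m) fun n _ => hpiece n).congr ?_
  filter_upwards [hnear] with x hx
  rw [intervalIntegral.sum_integral_adjacent_intervals fun k _ =>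
    (hx.mono (uIcc_subset_Icc (τ k).2 (τ (k + 1)).2)).intervalIntegrable, hτ₀, hτm m le_rfl]

end ParametricIntegral

section MatrixEntries

variable {𝕜 E ι : Type*} [NontriviallyNormedField 𝕜] [NormedAddCommGroup E] [NormedSpace 𝕜 E]
  [Fintype ι] [DecidableEq ι] {A : E → Matrix ι ι 𝕜} {x : E}

theorem AnalyticAt.matrix_det (hA : ∀ i j, AnalyticAt 𝕜 (fun y => A y i j) x) :
    AnalyticAt 𝕜 (fun y => (A y).det) x := by
  simp only [Matrix.det_apply']
  exact Finset.analyticAt_fun_sum _ fun σ _ =>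
    analyticAt_const.mul (Finset.analyticAt_fun_prod _ fun i _ => hA (σ i) i)

theorem AnalyticAt.matrix_adjugate_apply (hA : ∀ i j, AnalyticAt 𝕜 (fun y => A y i j) x)
    (i j : ι) : AnalyticAt 𝕜 (fun y => (A y).adjugate i j) x := by
  simp only [Matrix.adjugate_apply]
  refine AnalyticAt.matrix_det fun k l => ?_
  simp only [Matrix.updateRow_apply]
  split_ifs
  · exact analyticAt_const
  · exact hA k l

theorem AnalyticAt.matrix_inv_apply (hA : ∀ i j, AnalyticAt 𝕜 (fun y => A y i j) x)
    (hdet : (A x).det ≠ 0) (i j : ι) : AnalyticAt 𝕜 (fun y => (A y)⁻¹ i j) x := by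
  simp only [Matrix.inv_def, Ring.inverse_eq_inv', Matrix.smul_apply, smul_eq_mul]
  exact ((AnalyticAt.matrix_det hA).inv hdet).mul (AnalyticAt.matrix_adjugate_apply hA i j)

end MatrixEntries

section Symmetrization

open Finset

variable {ι R : Type*} [Fintype ι] [CommSemiring R]

theorem Finset.sum_sum_mul_add_mul_swap (f : ι → ι → R) (hf : ∀ k l, f k l = f l k)
    (a b : ι → R) :
    ∑ k, ∑ l, f k l * (a k * b l + b k * a l) = 2 * ∑ k, ∑ l, f k l * (a k * b l) := by
  simp only [mul_add, sum_add_distrib]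
  rw [sum_comm (f := fun k l => f k l * (b k * a l))]
  simp only [hf, mul_comm (b _), two_mul]

theorem sum_symmetrized_energy_eq_four_mul {C : ι → ι → ι → ι → R}
    (hsym1 : ∀ i j k l, C i j k l = C i j l k) (hsym2 : ∀ i j k l, C i j k l = C k l i j)
    (v n : ι → R) :
    ∑ i, ∑ j, ∑ k, ∑ l, C i j k l * (v i * n j + n i * v j) * (v k * n l + n k * v l) =
      4 * ∑ i, ∑ j, ∑ k, ∑ l, C i j k l * (v i * n j) * (v k * n l) := by
  set g : ι → ι → R := fun i j => ∑ k, ∑ l, C i j k l * (v k * n l)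
  have hg : ∀ i j, g i j = g j i := fun i j =>
    sum_congr rfl fun k _ => sum_congr rfl fun l _ => by rw [hsym2, hsym1, ← hsym2]
  calc _ = ∑ i, ∑ j, (2 * g i j) * (v i * n j + n i * v j) := by
        refine sum_congr rfl fun i _ => sum_congr rfl fun j _ => ?_
        rw [← sum_sum_mul_add_mul_swap _ (hsym1 i j), sum_mul]
        refine sum_congr rfl fun k _ => ?_
        rw [sum_mul]
        exact sum_congr rfl fun l _ => by ring
    _ = 4 * ∑ i, ∑ j, g i j * (v i * n j) := by
        simp only [mul_assoc (2 : R), ← mul_sum]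
        rw [sum_sum_mul_add_mul_swap g hg]
        ring
    _ = _ := by
        congr 1
        refine sum_congr rfl fun i _ => sum_congr rfl fun j _ => ?_
        rw [sum_mul]
        exact sum_congr rfl fun k _ => by rw [sum_mul]; exact sum_congr rfl fun l _ => by ring

end Symmetrization

section ElasticTensor

open Finset Matrix

variable {C : Fin 3 → Fin 3 → Fin 3 → Fin 3 → ℝ}

theorem sum_elastic_eq_dotProduct_acousticT_mulVec (v : Fin 3 → ℝ)
    (n : EuclideanSpace ℝ (Fin 3)) :
    ∑ i, ∑ j, ∑ k, ∑ l, C i j k l * (v i * n j) * (v k * n l) =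
      v ⬝ᵥ (acousticT C n *ᵥ v) := by
  simp only [Matrix.mulVec, dotProduct, acousticT, Matrix.of_apply, mul_sum, sum_mul]
  refine sum_congr rfl fun i _ => ?_
  rw [sum_comm]
  exact sum_congr rfl fun k _ => sum_congr rfl fun j _ => sum_congr rfl fun l _ => by ring

theorem acousticT_det_ne_zero (hsym1 : ∀ i j k l, C i j k l = C i j l k)
    (hsym2 : ∀ i j k l, C i j k l = C k l i j)
    (hconv : ∃ lam : ℝ, 0 < lam ∧ ∀ ε : Matrix (Fin 3) (Fin 3) ℝ, ε.IsSymm →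
      lam * ∑ i, ∑ j, (ε i j) ^ 2 ≤ ∑ i, ∑ j, ∑ k, ∑ l, C i j k l * ε i j * ε k l)
    {n : EuclideanSpace ℝ (Fin 3)} (hn : n ≠ 0) : (acousticT C n).det ≠ 0 := by
  obtain ⟨lam, hlam, hconv⟩ := hconv
  intro hdet
  obtain ⟨v, hv, hTv⟩ := Matrix.exists_mulVec_eq_zero_iff.2 hdet
  set ε : Matrix (Fin 3) (Fin 3) ℝ := Matrix.of fun i j => v i * n j + n i * v j
  have hε_symm : ε.IsSymm := IsSymm.ext fun i j => by simp only [ε, of_apply]; ring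
  have henergy : ∑ i, ∑ j, ∑ k, ∑ l, C i j k l * ε i j * ε k l = 0 := by
    simp only [ε, Matrix.of_apply, sum_symmetrized_energy_eq_four_mul hsym1 hsym2,
      sum_elastic_eq_dotProduct_acousticT_mulVec, hTv, dotProduct_zero, mul_zero]
  have hε : ∀ i j, ε i j = 0 := by
    have hsq := hconv ε hε_symm
    rw [henergy] at hsq
    have hsum : ∑ i, ∑ j, ε i j ^ 2 = 0 := le_antisymm
      (nonpos_of_mul_nonpos_right hsq hlam) (by positivity)
    intro i j
    rw [sum_eq_zero_iff_of_nonneg fun _ _ => by positivity] at hsum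
    exact pow_eq_zero_iff two_ne_zero |>.1 <|
      (sum_eq_zero_iff_of_nonneg fun _ _ => sq_nonneg _).1 (hsum i (mem_univ _)) j (mem_univ _)
  obtain ⟨j, hj⟩ : ∃ j, n j ≠ 0 := by
    by_contra! h
    exact hn (PiLp.ext h)
  have hvj : v j = 0 := by
    have := hε j j
    simp only [ε, Matrix.of_apply] at this
    exact (mul_eq_zero.1 (by linarith : v j * n j = 0)).resolve_right hj
  refine hv (funext fun i => ?_)
  have := hε i j
  simp only [ε, Matrix.of_apply, hvj, mul_zero, add_zero] at this
  exact (mul_eq_zero.1 this).resolve_right hj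

end ElasticTensor

section Elementary

variable {E : Type*} [NormedAddCommGroup E] [NormedSpace ℝ E] {f : E → ℝ} {x : E}

theorem AnalyticAt.sqrt (hf : AnalyticAt ℝ f x) (hx : 0 < f x) :
    AnalyticAt ℝ (fun y => √(f y)) x := by
  have hexp : AnalyticAt ℝ (fun y => Real.exp (Real.log (f y) / 2)) x :=
    ((analyticAt_log hx).comp hf).div_const.rexp'
  refine hexp.congr ?_
  filter_upwards [hf.continuousAt.eventually (lt_mem_nhds hx)] with y hy
  rw [Real.sqrt_eq_rpow, Real.rpow_def_of_pos hy, div_eq_mul_inv, one_div]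

theorem AnalyticAt.inv_sqrt_one_sub_sq (hf : AnalyticAt ℝ f x) (hx : f x ^ 2 < 1) :
    AnalyticAt ℝ (fun y => (√(1 - f y ^ 2))⁻¹) x := by
  have hpos : 0 < 1 - f x ^ 2 := by linarith
  exact ((analyticAt_const.sub (hf.pow 2)).sqrt hpos).inv (Real.sqrt_pos.2 hpos).ne'

end Elementary

section Frame

variable {E : Type*} [NormedAddCommGroup E] [NormedSpace ℝ E] {x : E}
  {l : E → EuclideanSpace ℝ (Fin 3)}

theorem AnalyticAt.lVec_apply {f : E → ℝ × ℝ} (hf : AnalyticAt ℝ f x)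
    (hx : (f x).1 ^ 2 + (f x).2 ^ 2 < 1) (j : Fin 3) : AnalyticAt ℝ (fun y => lVec (f y) j) x := by
  have h1 : AnalyticAt ℝ (fun y => (f y).1) x := analyticAt_fst.comp hf
  have h2 : AnalyticAt ℝ (fun y => (f y).2) x := analyticAt_snd.comp hf
  have hs : AnalyticAt ℝ (fun y => √(1 - (f y).1 ^ 2 - (f y).2 ^ 2)) x :=
    AnalyticAt.sqrt (by fun_prop) (by linarith)
  simp only [lVec, WithLp.equiv_symm_apply]
  fin_cases j <;> simp only [Fin.zero_eta, Fin.mk_one, Fin.reduceFinMk, Matrix.cons_val] <;> fun_prop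

theorem AnalyticAt.mZero_apply (hl : ∀ j, AnalyticAt ℝ (fun y => l y j) x) (hx : l x 0 ^ 2 < 1)
    (j : Fin 3) : AnalyticAt ℝ (fun y => mZero (l y) j) x := by
  have hc := (hl 0).inv_sqrt_one_sub_sq hx
  have h0 := hl 0
  have h1 := hl 1
  have h2 := hl 2
  simp only [mZero, WithLp.equiv_symm_apply, PiLp.smul_apply, smul_eq_mul]
  fin_cases j <;> simp only [Fin.zero_eta, Fin.mk_one, Fin.reduceFinMk, Matrix.cons_val] <;> fun_prop

theorem AnalyticAt.nZero_apply (hl : ∀ j, AnalyticAt ℝ (fun y => l y j) x) (hx : l x 0 ^ 2 < 1)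
    (j : Fin 3) : AnalyticAt ℝ (fun y => nZero (l y) j) x := by
  have hc := (hl 0).inv_sqrt_one_sub_sq hx
  have h1 := hl 1
  have h2 := hl 2
  simp only [nZero, WithLp.equiv_symm_apply, PiLp.smul_apply, smul_eq_mul]
  fin_cases j <;> simp only [Fin.zero_eta, Fin.mk_one, Fin.reduceFinMk, Matrix.cons_val] <;> fun_prop

variable {φ : E → ℝ}

theorem AnalyticAt.mPhi_apply (hl : ∀ j, AnalyticAt ℝ (fun y => l y j) x) (hx : l x 0 ^ 2 < 1)
    (hφ : AnalyticAt ℝ φ x) (j : Fin 3) : AnalyticAt ℝ (fun y => mPhi (l y) (φ y) j) x := by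
  have hm := AnalyticAt.mZero_apply hl hx j
  have hn := AnalyticAt.nZero_apply hl hx j
  simp only [mPhi, PiLp.add_apply, PiLp.smul_apply, smul_eq_mul]
  fun_prop

theorem AnalyticAt.nPhi_apply (hl : ∀ j, AnalyticAt ℝ (fun y => l y j) x) (hx : l x 0 ^ 2 < 1)
    (hφ : AnalyticAt ℝ φ x) (j : Fin 3) : AnalyticAt ℝ (fun y => nPhi (l y) (φ y) j) x := by
  have hm := AnalyticAt.mZero_apply hl hx j
  have hn := AnalyticAt.nZero_apply hl hx j
  simp only [nPhi, PiLp.add_apply, PiLp.smul_apply, smul_eq_mul]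
  fun_prop

variable (C : Fin 3 → Fin 3 → Fin 3 → Fin 3 → ℝ) {m n : E → EuclideanSpace ℝ (Fin 3)}

theorem AnalyticAt.matR_apply (hm : ∀ j, AnalyticAt ℝ (fun y => m y j) x)
    (hn : ∀ j, AnalyticAt ℝ (fun y => n y j) x) (i k : Fin 3) :
    AnalyticAt ℝ (fun y => matR C (m y) (n y) i k) x := by
  simp only [matR, Matrix.of_apply]
  exact Finset.analyticAt_fun_sum _ fun j _ => Finset.analyticAt_fun_sum _ fun l _ =>
    (analyticAt_const.mul (hm j)).mul (hn l)

theorem AnalyticAt.acousticT_apply (hn : ∀ j, AnalyticAt ℝ (fun y => n y j) x) (i k : Fin 3) :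
    AnalyticAt ℝ (fun y => acousticT C (n y) i k) x :=
  AnalyticAt.matR_apply C hn hn i k

end Frame

section UnitDisk

variable {p : ℝ × ℝ}

theorem lVec_zero_sq_lt_one (hp : p.1 ^ 2 + p.2 ^ 2 < 1) : lVec p 0 ^ 2 < 1 := by
  simp only [lVec, WithLp.equiv_symm_apply, Matrix.cons_val_zero]
  nlinarith [sq_nonneg p.2]

theorem nPhi_lVec_ne_zero (hp : p.1 ^ 2 + p.2 ^ 2 < 1) (φ : ℝ) : nPhi (lVec p) φ ≠ 0 := by
  intro h
  have h0 := congrArg (· 0) h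
  have h1 := congrArg (· 1) h
  simp only [nPhi, mZero, nZero, lVec, WithLp.equiv_symm_apply, PiLp.add_apply, PiLp.neg_apply,
    PiLp.smul_apply, PiLp.zero_apply, Matrix.cons_val_zero, Matrix.cons_val_one, Fin.isValue,
    smul_eq_mul, neg_smul, neg_mul, mul_neg, neg_neg, mul_zero, add_zero, neg_eq_zero,
    mul_eq_zero, inv_eq_zero] at h0 h1
  have hu : 0 < 1 - p.1 ^ 2 := by nlinarith [sq_nonneg p.2]
  have hs : 0 < 1 - p.1 ^ 2 - p.2 ^ 2 := by linarith
  have hsin : Real.sin φ = 0 := by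
    rcases h0 with h0 | h0 | h0
    · exact h0
    · exact absurd h0 (Real.sqrt_pos.2 hu).ne'
    · exact absurd h0 hu.ne'
  have hcos : Real.cos φ ≠ 0 := by
    intro hcos
    simpa [hsin, hcos] using Real.sin_sq_add_cos_sq φ
  simp only [hsin, zero_mul, zero_add] at h1
  exact mul_ne_zero hcos (mul_ne_zero (inv_ne_zero (Real.sqrt_pos.2 hu).ne')
    (Real.sqrt_pos.2 hs).ne') h1

end UnitDisk

section Integrands

variable {C : Fin 3 → Fin 3 → Fin 3 → Fin 3 → ℝ} {p : ℝ × ℝ}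

theorem analyticAt_mPhi_lVec_apply (hp : p.1 ^ 2 + p.2 ^ 2 < 1) (φ : ℝ) (j : Fin 3) :
    AnalyticAt ℝ (fun q : (ℝ × ℝ) × ℝ => mPhi (lVec q.1) q.2 j) (p, φ) :=
  AnalyticAt.mPhi_apply (analyticAt_fst.lVec_apply hp) (lVec_zero_sq_lt_one hp) analyticAt_snd j

theorem analyticAt_nPhi_lVec_apply (hp : p.1 ^ 2 + p.2 ^ 2 < 1) (φ : ℝ) (j : Fin 3) :
    AnalyticAt ℝ (fun q : (ℝ × ℝ) × ℝ => nPhi (lVec q.1) q.2 j) (p, φ) :=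
  AnalyticAt.nPhi_apply (analyticAt_fst.lVec_apply hp) (lVec_zero_sq_lt_one hp) analyticAt_snd j

theorem analyticAt_acousticT_nPhi_lVec_inv_apply (hsym1 : ∀ i j k l, C i j k l = C i j l k)
    (hsym2 : ∀ i j k l, C i j k l = C k l i j)
    (hconv : ∃ lam : ℝ, 0 < lam ∧ ∀ ε : Matrix (Fin 3) (Fin 3) ℝ, ε.IsSymm →
      lam * ∑ i, ∑ j, (ε i j) ^ 2 ≤ ∑ i, ∑ j, ∑ k, ∑ l, C i j k l * ε i j * ε k l)
    (hp : p.1 ^ 2 + p.2 ^ 2 < 1) (φ : ℝ) (i k : Fin 3) :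
    AnalyticAt ℝ (fun q : (ℝ × ℝ) × ℝ => (acousticT C (nPhi (lVec q.1) q.2))⁻¹ i k) (p, φ) :=
  AnalyticAt.matrix_inv_apply (AnalyticAt.acousticT_apply C (analyticAt_nPhi_lVec_apply hp φ))
    (acousticT_det_ne_zero hsym1 hsym2 hconv (nPhi_lVec_ne_zero hp φ)) i k

end Integrands

theorem SOne_STwo_analytic
    (C : Fin 3 → Fin 3 → Fin 3 → Fin 3 → ℝ)
    (hsym1 : ∀ i j k l, C i j k l = C i j l k)
    (hsym2 : ∀ i j k l, C i j k l = C k l i j)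
    (hconv : ∃ lam : ℝ, 0 < lam ∧ ∀ ε : Matrix (Fin 3) (Fin 3) ℝ, ε.IsSymm →
      lam * ∑ i, ∑ j, (ε i j) ^ 2 ≤ ∑ i, ∑ j, ∑ k, ∑ l, C i j k l * ε i j * ε k l) :
    ∀ i k : Fin 3,
      AnalyticOnNhd ℝ (fun p : ℝ × ℝ => SOne C (lVec p) i k)
          {p : ℝ × ℝ | p.1 ^ 2 + p.2 ^ 2 < 1} ∧
        AnalyticOnNhd ℝ (fun p : ℝ × ℝ => STwo C (lVec p) i k)
          {p : ℝ × ℝ | p.1 ^ 2 + p.2 ^ 2 < 1} := by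
  intro i k
  refine ⟨fun p hp => ?_, fun p hp => ?_⟩
  all_goals have hinv := analyticAt_acousticT_nPhi_lVec_inv_apply hsym1 hsym2 hconv hp
  · simp only [SOne, Matrix.of_apply, Matrix.mul_apply, Matrix.transpose_apply]
    exact analyticAt_const.mul (analyticAt_parametric_intervalIntegral fun φ _ =>
      Finset.analyticAt_fun_sum _ fun j _ => (hinv φ i j).mul
        (AnalyticAt.matR_apply C (analyticAt_mPhi_lVec_apply hp φ)
          (analyticAt_nPhi_lVec_apply hp φ) k j))
  · simp only [STwo, Matrix.of_apply]
    exact analyticAt_const.mul (analyticAt_parametric_intervalIntegral fun φ _ => hinv φ i k)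
end

section
/- (Recovery of a constant elastic tensor from its acoustic tensor.) Let C⁽¹⁾ and C⁽²⁾ be maps Fin 3 → Fin 3 → Fin 3 → Fin 3 → ℝ, each satisfying the symmetries C i j k l = C i j l k and C i j k l = C k l i j for all indices. If for every ξ ∈ ℝ³ and all indices i, l one has ∑_{j,k} C⁽¹⁾ i j k l · ξ_j · ξ_k = ∑_{j,k} C⁽²⁾ i j k l · ξ_j · ξ_k, then C⁽¹⁾ = C⁽²⁾ (i.e. C⁽¹⁾ i j k l = C⁽²⁾ i j k l for all indices). -/
/-!
The difference `D = C1 - C2` has vanishing acoustic quadratic form, so by polarization it is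
antisymmetric in its two middle indices. Together with the minor and major symmetries this makes
`D` symmetric in its first two indices, and alternating the two transpositions (12) and (23) six
times returns to the original index order with an odd number of sign changes: `D = -D`.
-/

open Finset

theorem add_eq_zero_of_forall_quadratic_eq_zero {ι R : Type*} [Fintype ι] [DecidableEq ι]
    [CommRing R] (A : ι → ι → R) (hA : ∀ ξ : ι → R, ∑ j, ∑ k, A j k * ξ j * ξ k = 0) (j k : ι) :
    A j k + A k j = 0 := by
  have hjk := hA (Pi.single j 1 + Pi.single k 1)
  have hj := hA (Pi.single j 1)
  have hk := hA (Pi.single k 1)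
  simp only [Pi.add_apply, Pi.single_apply, mul_add, mul_ite, mul_one, mul_zero,
    sum_add_distrib, sum_ite_eq', mem_univ, if_true] at hjk hj hk
  linear_combination hjk - hj - hk

theorem tensor_eq_zero_of_antisymm {ι M : Type*} [AddCommGroup M] [IsAddTorsionFree M]
    (T : ι → ι → ι → ι → M)
    (hminor : ∀ i j k l, T i j k l = T i j l k) (hmajor : ∀ i j k l, T i j k l = T k l i j)
    (hanti : ∀ i j k l, T i j k l + T i k j l = 0) : T = 0 := by
  have hswap (i j k l) : T i j k l = -T i k j l := eq_neg_of_add_eq_zero_left (hanti i j k l)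
  have hsymm (i j k l) : T i j k l = T j i k l := by
    rw [hswap i j k l, hmajor i k j l, hswap j l i k, hminor j i l k, neg_neg]
  funext i j k l
  refine self_eq_neg.mp ?_
  calc T i j k l = T j i k l := hsymm ..
    _ = -T j k i l := hswap ..
    _ = -T k j i l := by rw [hsymm]
    _ = T k i j l := by rw [hswap, neg_neg]
    _ = T i k j l := hsymm ..
    _ = -T i j k l := by rw [hswap i k j l]

theorem elastic_tensor_recovery_from_acoustic
    (C1 C2 : Fin 3 → Fin 3 → Fin 3 → Fin 3 → ℝ)
    (h1minor : ∀ i j k l, C1 i j k l = C1 i j l k)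
    (h1major : ∀ i j k l, C1 i j k l = C1 k l i j)
    (h2minor : ∀ i j k l, C2 i j k l = C2 i j l k)
    (h2major : ∀ i j k l, C2 i j k l = C2 k l i j)
    (hac : ∀ ξ : Fin 3 → ℝ, ∀ i l : Fin 3,
      ∑ j, ∑ k, C1 i j k l * ξ j * ξ k = ∑ j, ∑ k, C2 i j k l * ξ j * ξ k) :
    C1 = C2 := by
  refine sub_eq_zero.mp (tensor_eq_zero_of_antisymm (C1 - C2) ?_ ?_ fun i j k l => ?_)
  · intro i j k l
    simp only [Pi.sub_apply, h1minor i j k l, h2minor i j k l]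
  · intro i j k l
    simp only [Pi.sub_apply, h1major i j k l, h2major i j k l]
  refine add_eq_zero_of_forall_quadratic_eq_zero (fun j k => (C1 - C2) i j k l) (fun ξ => ?_) j k
  simp only [Pi.sub_apply, sub_mul, sum_sub_distrib, hac ξ i l, sub_self]
end

section
/- Define f : ℝ → ℝ by f(x) = x²·sin(1/x) for x ≠ 0 and f(0) = 0, and set A = {(x,y) ∈ ℝ² : -1 < x < 1 and f(x) < y < 2} and B = {(x,y) ∈ ℝ² : -1 < x < 1 and -1 < y < 0}. Then A ∩ B is an open subset of ℝ² whose set of connected components is infinite; i.e., A ∩ B is the union of infinitely many pairwise disjoint nonempty open connected sets. -/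
open Real Set

theorem intersection_infinitely_many_components
    (f : ℝ → ℝ) (hf : ∀ x : ℝ, x ≠ 0 → f x = x ^ 2 * Real.sin (1 / x)) (hf0 : f 0 = 0)
    (A B : Set (ℝ × ℝ))
    (hA : A = {p : ℝ × ℝ | -1 < p.1 ∧ p.1 < 1 ∧ f p.1 < p.2 ∧ p.2 < 2})
    (hB : B = {p : ℝ × ℝ | -1 < p.1 ∧ p.1 < 1 ∧ -1 < p.2 ∧ p.2 < 0}) :
    IsOpen (A ∩ B) ∧
      Set.Infinite {s : Set (ℝ × ℝ) | ∃ x ∈ A ∩ B, s = connectedComponentIn (A ∩ B) x} := by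
  have hπ := Real.pi_pos
  have hπ3 := Real.pi_gt_three
  -- continuity of f
  have hcont : Continuous f := by
    rw [continuous_iff_continuousAt]
    intro x
    rcases eq_or_ne x 0 with rfl | hx
    · rw [ContinuousAt, hf0]
      refine squeeze_zero_norm (a := fun x : ℝ => x ^ 2) ?_ ?_
      · intro t
        rcases eq_or_ne t 0 with rfl | ht
        · simp [hf0]
        · rw [hf t ht, Real.norm_eq_abs, abs_mul]
          calc |t ^ 2| * |Real.sin (1 / t)| ≤ |t ^ 2| * 1 := by
                gcongr; exact Real.abs_sin_le_one _
            _ = t ^ 2 := by rw [mul_one, abs_of_nonneg (sq_nonneg t)]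
      · simpa using ((continuous_pow 2).tendsto (0 : ℝ))
    · have hg : ContinuousAt (fun y : ℝ => y ^ 2 * Real.sin (1 / y)) x := by
        exact (continuousAt_pow x 2).mul
          (Real.continuous_sin.continuousAt.comp
            ((continuousAt_const.div continuousAt_id hx)))
      apply hg.congr
      filter_upwards [isOpen_ne.mem_nhds hx] with y hy
      exact (hf y hy).symm
  have hopen : IsOpen (A ∩ B) := by
    apply IsOpen.inter
    · rw [hA]
      simp only [Set.setOf_and]
      exact ((isOpen_lt continuous_const continuous_fst).inter
        ((isOpen_lt continuous_fst continuous_const).inter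
          ((isOpen_lt (hcont.comp continuous_fst) continuous_snd).inter
            (isOpen_lt continuous_snd continuous_const))))
    · rw [hB]
      simp only [Set.setOf_and]
      exact ((isOpen_lt continuous_const continuous_fst).inter
        ((isOpen_lt continuous_fst continuous_const).inter
          ((isOpen_lt continuous_const continuous_snd).inter
            (isOpen_lt continuous_snd continuous_const))))
  refine ⟨hopen, ?_⟩
  -- the special points
  set X : ℕ → ℝ := fun n => (3 * π / 2 + 2 * π * n)⁻¹ with hX
  set C : ℕ → ℝ := fun n => (π / 2 + 2 * π * n)⁻¹ with hC
  have hXd : ∀ n : ℕ, (1 : ℝ) < 3 * π / 2 + 2 * π * n := by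
    intro n
    have : (0 : ℝ) ≤ (n : ℝ) := Nat.cast_nonneg n
    nlinarith
  have hCd : ∀ n : ℕ, (0 : ℝ) < π / 2 + 2 * π * n := by
    intro n
    have : (0 : ℝ) ≤ (n : ℝ) := Nat.cast_nonneg n
    nlinarith
  have hXpos : ∀ n, 0 < X n := fun n => inv_pos.mpr (lt_trans one_pos (hXd n))
  have hXlt1 : ∀ n, X n < 1 := by
    intro n
    rw [hX]
    simpa using (inv_lt_one_of_one_lt₀ (hXd n))
  have hCpos : ∀ n, 0 < C n := fun n => inv_pos.mpr (hCd n)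
  have hfX : ∀ n, f (X n) = -(X n) ^ 2 := by
    intro n
    rw [hf (X n) (ne_of_gt (hXpos n)), one_div, hX]
    simp only [inv_inv]
    have h1 : 3 * π / 2 + 2 * π * (n : ℝ) = π / 2 + π + (n : ℝ) * (2 * π) := by ring
    rw [h1, Real.sin_add_nat_mul_two_pi, Real.sin_add_pi, Real.sin_pi_div_two]
    ring
  have hfC : ∀ n, f (C n) = (C n) ^ 2 := by
    intro n
    rw [hf (C n) (ne_of_gt (hCpos n)), one_div, hC]
    simp only [inv_inv]
    have h1 : π / 2 + 2 * π * (n : ℝ) = π / 2 + (n : ℝ) * (2 * π) := by ring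
    rw [h1, Real.sin_add_nat_mul_two_pi, Real.sin_pi_div_two]
    ring
  set P : ℕ → ℝ × ℝ := fun n => (X n, -(X n) ^ 2 / 2) with hP
  have hPmem : ∀ n, P n ∈ A ∩ B := by
    intro n
    have hx0 := hXpos n
    have hx1 := hXlt1 n
    have hsq : 0 < (X n) ^ 2 := pow_pos hx0 2
    have hsq1 : (X n) ^ 2 < 1 := by nlinarith
    constructor
    · rw [hA]
      refine ⟨by linarith, by linarith, ?_, by simp [hP]; nlinarith⟩
      simp only [hP, hfX n]
      nlinarith
    · rw [hB]
      exact ⟨by linarith, by linarith, by simp [hP]; nlinarith, by simp [hP]; nlinarith⟩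
  -- columns at C m are empty
  have hcol : ∀ m : ℕ, ∀ q : ℝ × ℝ, q ∈ A ∩ B → q.1 ≠ C m := by
    intro m q hq hq1
    rw [hA, hB] at hq
    obtain ⟨⟨_, _, h3, _⟩, ⟨_, _, _, h8⟩⟩ := hq
    rw [hq1, hfC m] at h3
    nlinarith [pow_pos (hCpos m) 2]
  -- ordering facts
  have hXC : ∀ m, X m < C m := by
    intro m
    apply inv_strictAnti₀ (hCd m)
    linarith
  have hCX : ∀ n m : ℕ, n < m → C m < X n := by
    intro n m hnm
    apply inv_strictAnti₀ (lt_trans one_pos (hXd n))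
    have : (n : ℝ) + 1 ≤ (m : ℝ) := by exact_mod_cast Nat.succ_le_of_lt hnm
    nlinarith
  -- components are distinct
  have key : ∀ n m : ℕ, n < m →
      connectedComponentIn (A ∩ B) (P n) ≠ connectedComponentIn (A ∩ B) (P m) := by
    intro n m hnm heq
    have hKconn : IsPreconnected (connectedComponentIn (A ∩ B) (P n)) :=
      (isConnected_connectedComponentIn_iff.mpr (hPmem n)).isPreconnected
    set K := connectedComponentIn (A ∩ B) (P n) with hK
    have hpn : P n ∈ K := mem_connectedComponentIn (hPmem n)
    have hpm : P m ∈ K := heq ▸ mem_connectedComponentIn (hPmem m)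
    have hKS : K ⊆ A ∩ B := connectedComponentIn_subset _ _
    have hcover : K ⊆ {q : ℝ × ℝ | q.1 < C m} ∪ {q : ℝ × ℝ | C m < q.1} := by
      intro q hq
      rcases lt_trichotomy q.1 (C m) with h | h | h
      · exact Or.inl h
      · exact absurd h (hcol m q (hKS hq))
      · exact Or.inr h
    obtain ⟨q, hqK, hq1, hq2⟩ :=
      hKconn {q : ℝ × ℝ | q.1 < C m} {q : ℝ × ℝ | C m < q.1}
        (isOpen_lt continuous_fst continuous_const)
        (isOpen_lt continuous_const continuous_fst) hcover
        ⟨P m, hpm, hXC m⟩ ⟨P n, hpn, hCX n m hnm⟩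
    simp only [Set.mem_setOf_eq] at hq1 hq2
    linarith
  apply Set.infinite_of_injective_forall_mem
    (f := fun n : ℕ => connectedComponentIn (A ∩ B) (P n))
  · intro n m h
    by_contra hne
    rcases Nat.lt_or_ge n m with hlt | hge
    · exact key n m hlt h
    · exact key m n (lt_of_le_of_ne hge (Ne.symm hne)) h.symm
  · intro n
    exact ⟨P n, hPmem n, rfl⟩
end

section
/- Set A' = {(x,y) ∈ ℝ² : 1 ≤ x < 2 and 0 < y < 2} ∪ {(x,y) ∈ ℝ² : 0 < x < 1 and √(1-x²) < y < 2} and B' = {(x,y) ∈ ℝ² : 0 < x < 1 and 0 < y < 1}. Then (1) A' ∩ B' = S where S = {(x,y) ∈ ℝ² : 0 < x < 1 and √(1-x²) < y < 1}; and (2) S fails the segment property at the boundary points p = (0,1) and p = (1,0): for each such p there do NOT exist an open neighborhood U of p and a nonzero vector d ∈ ℝ² such that z + t·d ∈ S for every z in (closure of S) ∩ U and every t ∈ (0,1). -/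
theorem intersection_fails_segment_property
    (A' B' S : Set (ℝ × ℝ))
    (hA : A' = {p : ℝ × ℝ | 1 ≤ p.1 ∧ p.1 < 2 ∧ 0 < p.2 ∧ p.2 < 2} ∪
      {p : ℝ × ℝ | 0 < p.1 ∧ p.1 < 1 ∧ Real.sqrt (1 - p.1 ^ 2) < p.2 ∧ p.2 < 2})
    (hB : B' = {p : ℝ × ℝ | 0 < p.1 ∧ p.1 < 1 ∧ 0 < p.2 ∧ p.2 < 1})
    (hS : S = {p : ℝ × ℝ | 0 < p.1 ∧ p.1 < 1 ∧ Real.sqrt (1 - p.1 ^ 2) < p.2 ∧ p.2 < 1}) :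
    A' ∩ B' = S ∧
      ∀ p : ℝ × ℝ, p = (0, 1) ∨ p = (1, 0) →
        ¬ ∃ (U : Set (ℝ × ℝ)) (d : ℝ × ℝ), IsOpen U ∧ p ∈ U ∧ d ≠ 0 ∧
          ∀ z ∈ closure S ∩ U, ∀ t ∈ Set.Ioo (0 : ℝ) 1, z + t • d ∈ S := by
  subst hA hB hS
  constructor
  · ext ⟨x, y⟩
    simp only [Set.mem_inter_iff, Set.mem_union, Set.mem_setOf_eq]
    constructor
    · rintro ⟨h1 | ⟨_, _, h3, _⟩, hx0, hx1, hy0, hy1⟩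
      · linarith [h1.1]
      · exact ⟨hx0, hx1, h3, hy1⟩
    · rintro ⟨hx0, hx1, hsy, hy1⟩
      exact ⟨Or.inr ⟨hx0, hx1, hsy, by linarith⟩, hx0, hx1,
        lt_of_le_of_lt (Real.sqrt_nonneg _) hsy, hy1⟩
  · rintro p (rfl | rfl) ⟨U, d, hU, hpU, hd, hcond⟩
    · -- p = (0,1)
      have hclos : ((0:ℝ), (1:ℝ)) ∈ closure {p : ℝ × ℝ | 0 < p.1 ∧ p.1 < 1 ∧
          Real.sqrt (1 - p.1 ^ 2) < p.2 ∧ p.2 < 1} := by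
        rw [Metric.mem_closure_iff]
        intro ε hε
        set s := min (ε/2) (1/2) with hs
        have hs0 : 0 < s := lt_min (by linarith) (by norm_num)
        have hs2 : s ≤ 1/2 := min_le_right _ _
        have hsε : s ≤ ε/2 := min_le_left _ _
        refine ⟨(s, 1 - s^2/2), ?_, ?_⟩
        · show 0 < s ∧ s < 1 ∧ Real.sqrt (1 - s ^ 2) < 1 - s^2/2 ∧ 1 - s^2/2 < 1
          refine ⟨hs0, by linarith, ?_, by nlinarith⟩
          rw [Real.sqrt_lt' (by nlinarith)]
          nlinarith [pow_pos hs0 4]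
        · rw [Prod.dist_eq]
          simp only [Real.dist_eq]
          apply max_lt
          · rw [abs_lt]; constructor <;> nlinarith
          · rw [abs_lt]; constructor <;> nlinarith
      have key : ∀ t ∈ Set.Ioo (0:ℝ) 1, 0 < t * d.1 ∧ t * d.1 < 1 ∧
          Real.sqrt (1 - (t * d.1) ^ 2) < 1 + t * d.2 ∧ 1 + t * d.2 < 1 := by
        intro t ht
        have h := hcond ((0:ℝ), (1:ℝ)) ⟨hclos, hpU⟩ t ht
        simpa [Prod.fst_add, Prod.snd_add, smul_eq_mul] using h
      have h2 := key (1/2) ⟨by norm_num, by norm_num⟩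
      have hd1 : 0 < d.1 := by nlinarith [h2.1]
      have hd2 : d.2 < 0 := by nlinarith [h2.2.2.2]
      set t0 := min (1/2 : ℝ) (-d.2/(2*d.1^2)) with ht0
      have ht0pos : 0 < t0 := lt_min (by norm_num) (div_pos (by linarith) (by positivity))
      have ht0lt : t0 < 1 := lt_of_le_of_lt (min_le_left _ _) (by norm_num)
      obtain ⟨hk1, hk2, hk3, hk4⟩ := key t0 ⟨ht0pos, ht0lt⟩
      have harg : (0:ℝ) ≤ 1 - (t0 * d.1) ^ 2 := by nlinarith
      have hsq : 1 - (t0 * d.1) ^ 2 ≤ Real.sqrt (1 - (t0 * d.1) ^ 2) := by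
        nth_rewrite 1 [← Real.sqrt_sq harg]
        exact Real.sqrt_le_sqrt (by nlinarith)
      have hb : t0 * (2 * d.1 ^ 2) ≤ -d.2 := by
        have := min_le_right (1/2 : ℝ) (-d.2/(2*d.1^2))
        rw [le_div_iff₀ (by positivity)] at this
        linarith
      nlinarith [mul_le_mul_of_nonneg_left hb ht0pos.le]
    · -- p = (1,0)
      have hclos : ((1:ℝ), (0:ℝ)) ∈ closure {p : ℝ × ℝ | 0 < p.1 ∧ p.1 < 1 ∧
          Real.sqrt (1 - p.1 ^ 2) < p.2 ∧ p.2 < 1} := by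
        rw [Metric.mem_closure_iff]
        intro ε hε
        set s := min (ε/4) (1/4) with hs
        have hs0 : 0 < s := lt_min (by linarith) (by norm_num)
        have hs2 : s ≤ 1/4 := min_le_right _ _
        have hsε : s ≤ ε/4 := min_le_left _ _
        refine ⟨(1 - s^2, 2*s), ?_, ?_⟩
        · show 0 < 1 - s^2 ∧ 1 - s^2 < 1 ∧ Real.sqrt (1 - (1 - s^2) ^ 2) < 2*s ∧ 2*s < 1
          refine ⟨by nlinarith, by nlinarith, ?_, by nlinarith⟩
          rw [Real.sqrt_lt' (by nlinarith)]
          nlinarith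
        · rw [Prod.dist_eq]
          simp only [Real.dist_eq]
          apply max_lt
          · rw [abs_lt]; constructor <;> nlinarith
          · rw [abs_lt]; constructor <;> nlinarith
      have key : ∀ t ∈ Set.Ioo (0:ℝ) 1, 0 < 1 + t * d.1 ∧ 1 + t * d.1 < 1 ∧
          Real.sqrt (1 - (1 + t * d.1) ^ 2) < t * d.2 ∧ t * d.2 < 1 := by
        intro t ht
        have h := hcond ((1:ℝ), (0:ℝ)) ⟨hclos, hpU⟩ t ht
        simpa [Prod.fst_add, Prod.snd_add, smul_eq_mul] using h
      have h2 := key (1/2) ⟨by norm_num, by norm_num⟩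
      have hd1 : d.1 < 0 := by nlinarith [h2.2.1]
      have hd2 : 0 < d.2 := by
        have := lt_of_le_of_lt (Real.sqrt_nonneg _) h2.2.2.1
        nlinarith
      set t0 := min (1/2 : ℝ) (-d.1/(2*d.2^2)) with ht0
      have ht0pos : 0 < t0 := lt_min (by norm_num) (div_pos (by linarith) (by positivity))
      have ht0lt : t0 < 1 := lt_of_le_of_lt (min_le_left _ _) (by norm_num)
      obtain ⟨hk1, hk2, hk3, hk4⟩ := key t0 ⟨ht0pos, ht0lt⟩
      rw [Real.sqrt_lt' (by nlinarith)] at hk3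
      have hb : t0 * (2 * d.2 ^ 2) ≤ -d.1 := by
        have := min_le_right (1/2 : ℝ) (-d.1/(2*d.2^2))
        rw [le_div_iff₀ (by positivity)] at this
        linarith
      nlinarith [mul_le_mul_of_nonneg_left hb ht0pos.le]
end
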